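/- arXiv:1812.05236 — 4 statements merged into one kernel-verified Lean document; each statement's English description precedes it below -/
import Mathlib

section
/- For n ≥ 2 and 1 ≤ n_b ≤ n - 1, Σ_{k=2}^{n} (1/(k-1)) * binom(n - n_b - 1, k - 2) / binom(n-1, k-1) = 1/n_b. -/
open Finset

noncomputable def gAux (m c : ℕ) (i : ℕ) : ℝ :=
  ((m - c).choose i : ℝ) / ((c : ℝ) * (m.choose i : ℝ))

lemma choose_cast_rel (a k : ℕ) (hk : k ≤ a) :
    ((a.choose (k + 1)) : ℝ) * ((k : ℝ) + 1) = (a.choose k : ℝ) * ((a : ℝ) - (k : ℝ)) := by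
  have h := congrArg (Nat.cast : ℕ → ℝ) (Nat.choose_succ_right_eq a k)
  push_cast [Nat.cast_sub hk] at h
  linarith [h]

/-- For `n ≥ 2` and `1 ≤ n_b ≤ n - 1`:
`Σ_{k=2}^{n} (1/(k-1)) * binom(n - n_b - 1, k - 2) / binom(n-1, k-1) = 1/n_b`,
i.e. `Σ_{k=2}^{n} p_{nk}(n_b)/(k-1) = 1/n_b`. -/
theorem sum_pnk_div_k_sub_one (n nb : ℕ) (hn : 2 ≤ n) (hnb : 1 ≤ nb) (hnb' : nb ≤ n - 1) :
    ∑ k ∈ Finset.Icc 2 n,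
        (1 / ((k : ℝ) - 1)) * ((n - nb - 1).choose (k - 2) : ℝ) / ((n - 1).choose (k - 1) : ℝ) =
      1 / (nb : ℝ) := by
  obtain ⟨m, rfl⟩ : ∃ m, n = m + 1 := ⟨n - 1, by omega⟩
  have hm : 1 ≤ m := by omega
  have hc : nb ≤ m := by omega
  have hnb0 : (nb : ℝ) ≠ 0 := Nat.cast_ne_zero.mpr (by omega)
  rw [← Finset.Ico_add_one_right_eq_Icc, Finset.sum_Ico_eq_sum_range]
  have hr : m + 1 + 1 - 2 = m := by omega
  rw [hr]
  have hterm : ∀ i ∈ Finset.range m,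
      (1 / (((2 + i : ℕ) : ℝ) - 1)) * ((m + 1 - nb - 1).choose ((2 + i) - 2) : ℝ) /
        ((m + 1 - 1).choose ((2 + i) - 1) : ℝ)
        = gAux m nb i - gAux m nb (i + 1) := by
    intro i hi
    rw [Finset.mem_range] at hi
    have e1 : (2 + i) - 2 = i := by omega
    have e2 : (2 + i) - 1 = i + 1 := by omega
    have e3 : m + 1 - nb - 1 = m - nb := by omega
    have e4 : m + 1 - 1 = m := by omega
    have e5 : (((2 + i : ℕ) : ℝ) - 1) = (i : ℝ) + 1 := by push_cast; ring
    rw [e1, e2, e3, e4, e5]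
    unfold gAux
    by_cases hcase : i ≤ m - nb
    · have hA : (m.choose i : ℝ) ≠ 0 :=
        Nat.cast_ne_zero.mpr (Nat.choose_pos (by omega)).ne'
      have hB : (m.choose (i + 1) : ℝ) ≠ 0 :=
        Nat.cast_ne_zero.mpr (Nat.choose_pos (by omega)).ne'
      have hi1 : ((i : ℝ) + 1) ≠ 0 := by positivity
      have h1 : ((m.choose (i + 1)) : ℝ) * ((i : ℝ) + 1)
          = (m.choose i : ℝ) * ((m : ℝ) - (i : ℝ)) := choose_cast_rel m i (by omega)
      have h2 : (((m - nb).choose (i + 1)) : ℝ) * ((i : ℝ) + 1)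
          = ((m - nb).choose i : ℝ) * (((m - nb : ℕ) : ℝ) - (i : ℝ)) :=
        choose_cast_rel (m - nb) i hcase
      have hmnb : ((m - nb : ℕ) : ℝ) = (m : ℝ) - (nb : ℝ) := by
        push_cast [Nat.cast_sub hc]; ring
      rw [hmnb] at h2
      field_simp
      linear_combination ((m.choose i : ℝ)) * h2 -
        (((m - nb).choose i : ℝ)) * h1
    · have z1 : (m - nb).choose i = 0 := Nat.choose_eq_zero_of_lt (by omega)
      have z2 : (m - nb).choose (i + 1) = 0 := Nat.choose_eq_zero_of_lt (by omega)
      rw [z1, z2]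
      simp
  rw [Finset.sum_congr rfl hterm, Finset.sum_range_sub' (gAux m nb)]
  have gz : gAux m nb m = 0 := by
    unfold gAux
    rw [Nat.choose_eq_zero_of_lt (by omega)]
    simp
  rw [gz]
  unfold gAux
  simp
end

section
/- For the Kingman coalescent with 2 ≤ l ≤ k ≤ n, the conditional expected time E[(t - (T_n + ··· + T_{l+1})) · 1{A_n(t) = l}], i.e. the expectation of the time spent with l edges before time t on the event that l edges remain at time t, equals binom(l,2)^{-1} ∫_0^t f_{nl}(τ) e^{-binom(l,2)(t-τ)} dτ, the same expression as E[T_l · 1{A_n(t) = l}] would give formally. -/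
open MeasureTheory ProbabilityTheory Finset Real
open Filter Topology


lemma integral_rate_exp_Ioi {r : ℝ} (hr : 0 < r) (a : ℝ) :
    ∫ x in Set.Ioi a, r * Real.exp (-(r * x)) = Real.exp (-(r * a)) := by
  have htop : Tendsto (fun x => -Real.exp (-(r * x))) atTop (𝓝 0) := by
    have h1 : Tendsto (fun x : ℝ => r * x) atTop atTop :=
      Tendsto.const_mul_atTop hr tendsto_id
    have h2 : Tendsto (fun x : ℝ => Real.exp (-(r * x))) atTop (𝓝 0) :=
      tendsto_exp_neg_atTop_nhds_zero.comp h1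
    simpa using h2.neg
  have h := integral_Ioi_of_hasDerivAt_of_tendsto' (a := a) (m := 0)
    (f := fun x => -Real.exp (-(r * x))) (f' := fun x => r * Real.exp (-(r * x)))
    (fun x _ => hasDerivAt_neg_exp_mul_exp)
    (by simpa [neg_mul, IntegrableOn] using (exp_neg_integrableOn_Ioi a hr).const_mul r) htop
  simpa using h

lemma expMeasure_Ioi {r : ℝ} (hr : 0 < r) {a : ℝ} (ha : 0 ≤ a) :
    expMeasure r (Set.Ioi a) = ENNReal.ofReal (Real.exp (-(r * a))) := by
  rw [expMeasure, gammaMeasure, withDensity_apply _ measurableSet_Ioi]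
  calc ∫⁻ x in Set.Ioi a, gammaPDF 1 r x
      = ∫⁻ x in Set.Ioi a, ENNReal.ofReal (r * Real.exp (-(r * x))) := by
        refine setLIntegral_congr_fun measurableSet_Ioi (fun x hx => ?_)
        rw [show gammaPDF 1 r x = exponentialPDF r x from rfl,
          exponentialPDF_of_nonneg (ha.trans (le_of_lt hx))]
    _ = ENNReal.ofReal (∫ x in Set.Ioi a, r * Real.exp (-(r * x))) := by
        rw [← ofReal_integral_eq_lintegral_ofReal
          (by simpa [neg_mul] using (exp_neg_integrableOn_Ioi a hr).const_mul r)
          (ae_of_all _ fun x => by positivity)]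
    _ = _ := by rw [integral_rate_exp_Ioi hr]

lemma expMeasure_Iio_zero {r : ℝ} : expMeasure r (Set.Iio 0) = 0 := by
  rw [expMeasure, gammaMeasure, withDensity_apply _ measurableSet_Iio]
  exact lintegral_exponentialPDF_of_nonpos le_rfl

/-- Kingman coalescent: `T_n, ..., T_2` independent exponentials with rates `binom(j,2)`,
`{A_n(t) = l} = {T_n + ⋯ + T_{l+1} < t < T_n + ⋯ + T_l}`, and `f_{nl}(τ) = binom(l,2) q_{nl}(τ)`
the density of `T_n + ⋯ + T_l`. For `2 ≤ l ≤ k ≤ n`, the expected time spent with `l` edges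
before time `t` on the event `{A_n(t) = l}` satisfies
`E[(t - (T_n + ⋯ + T_{l+1})) · 1{A_n(t) = l}] = binom(l,2)⁻¹ ∫_0^t f_{nl}(τ) e^{-binom(l,2)(t-τ)} dτ`. -/
theorem time_with_l_edges (n l k : ℕ) (hl : 2 ≤ l) (hlk : l ≤ k) (hkn : k ≤ n)
    (Ω : Type*) [MeasureSpace Ω] [IsProbabilityMeasure (ℙ : Measure Ω)]
    (T : ℕ → Ω → ℝ) (hmeas : ∀ j, Measurable (T j))
    (hindep : iIndepFun T ℙ)
    (hexp : ∀ j, 2 ≤ j → j ≤ n →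
      Measure.map (T j) ℙ = expMeasure ((j.choose 2 : ℝ)))
    (f : ℝ → ℝ)
    (hf : ∀ τ : ℝ, f τ = (l.choose 2 : ℝ) *
      (ℙ {ω | (∑ j ∈ Finset.Icc (l + 1) n, T j ω) < τ ∧
        τ < ∑ j ∈ Finset.Icc l n, T j ω}).toReal)
    (t : ℝ) (ht : 0 < t) :
    (∫ ω in {ω | (∑ j ∈ Finset.Icc (l + 1) n, T j ω) < t ∧
        t < ∑ j ∈ Finset.Icc l n, T j ω},
        (t - ∑ j ∈ Finset.Icc (l + 1) n, T j ω) ∂ℙ) =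
      ((l.choose 2 : ℝ))⁻¹ *
        ∫ τ in Set.Ioc (0 : ℝ) t, f τ * Real.exp (-(l.choose 2 : ℝ) * (t - τ)) := by
  have hln : l ≤ n := hlk.trans hkn
  set c : ℝ := (l.choose 2 : ℝ) with hc_def
  have hc : 0 < c := by
    rw [hc_def]
    exact_mod_cast Nat.choose_pos hl
  set S : Ω → ℝ := fun ω => ∑ j ∈ Finset.Icc (l + 1) n, T j ω with hS_def
  have hS_meas : Measurable S := Finset.measurable_sum _ fun j _ => hmeas j
  -- split the sum over `Icc l n`
  have h_sum_eq : ∀ ω, ∑ j ∈ Finset.Icc l n, T j ω = T l ω + S ω := by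
    intro ω
    rw [hS_def, ← Finset.Ioc_insert_left hln, Finset.sum_insert (by simp),
      ← Finset.Icc_add_one_left_eq_Ioc]
  -- independence of S and T l
  have h_indep : IndepFun S (T l) ℙ := by
    have h := hindep.indepFun_finsetSum_of_notMem hmeas
      (s := Finset.Icc (l + 1) n) (i := l) (by simp)
    have hfun : S = ∑ j ∈ Finset.Icc (l + 1) n, T j := by
      funext ω; simp [hS_def, Finset.sum_apply]
    rw [hfun]; exact h
  set μ : Measure ℝ := Measure.map S ℙ with hμ_def
  set ν : Measure ℝ := Measure.map (T l) ℙ with hν_def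
  have hν : ν = expMeasure c := by rw [hν_def]; exact hexp l hl hln
  haveI hμ_prob : IsProbabilityMeasure μ := Measure.isProbabilityMeasure_map hS_meas.aemeasurable
  haveI hν_prob : IsProbabilityMeasure ν := by
    rw [hν]; exact isProbabilityMeasure_expMeasure hc
  set φ : Ω → ℝ × ℝ := fun ω => (S ω, T l ω) with hφ_def
  have hφ : Measurable φ := hS_meas.prodMk (hmeas l)
  have h_joint : Measure.map φ ℙ = μ.prod ν :=
    (indepFun_iff_map_prod_eq_prod_map_map hS_meas.aemeasurable
      (hmeas l).aemeasurable).mp h_indep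
  -- S is a.e. nonnegative
  have h_nonneg : ∀ᵐ ω ∂(ℙ : Measure Ω), 0 ≤ S ω := by
    have h_each : ∀ j ∈ Finset.Icc (l + 1) n, ∀ᵐ ω ∂(ℙ : Measure Ω), 0 ≤ T j ω := by
      intro j hj
      simp only [Finset.mem_Icc] at hj
      rw [ae_iff]
      have hpre : {ω | ¬ 0 ≤ T j ω} = T j ⁻¹' Set.Iio 0 := by
        ext ω; simp [not_le]
      rw [hpre, ← Measure.map_apply (hmeas j) measurableSet_Iio,
        hexp j (by omega) hj.2, expMeasure_Iio_zero]
    have := (ae_ball_iff (Finset.Icc (l + 1) n).countable_toSet).mpr h_each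
    filter_upwards [this] with ω hω
    exact Finset.sum_nonneg fun j hj => hω j hj
  have h_nonneg_μ : ∀ᵐ x ∂μ, 0 ≤ x := by
    rw [hμ_def]
    rw [ae_map_iff hS_meas.aemeasurable measurableSet_Ici]
    exact h_nonneg
  -- the events as preimages
  have hE_meas : ∀ τ : ℝ, MeasurableSet {p : ℝ × ℝ | p.1 < τ ∧ τ < p.1 + p.2} :=
    fun τ => (measurableSet_lt measurable_fst measurable_const).inter
      (measurableSet_lt measurable_const (measurable_fst.add measurable_snd))
  have hA_pre : ∀ τ : ℝ, {ω | S ω < τ ∧ τ < ∑ j ∈ Finset.Icc l n, T j ω}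
      = φ ⁻¹' {p : ℝ × ℝ | p.1 < τ ∧ τ < p.1 + p.2} := by
    intro τ; ext ω
    simp only [Set.mem_setOf_eq, Set.mem_preimage, hφ_def, h_sum_eq ω]
    constructor
    · rintro ⟨h1, h2⟩; exact ⟨h1, by linarith⟩
    · rintro ⟨h1, h2⟩; exact ⟨h1, by linarith⟩
  -- the common value
  set KEY : ℝ := ∫ x, Set.indicator (Set.Ico 0 t)
    (fun x => (t - x) * Real.exp (-(c * (t - x)))) x ∂μ with hKEY_def
  have hμ0 : μ (Set.Iio 0) = 0 := by
    have := ae_iff.mp h_nonneg_μ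
    simpa [not_le, Set.Iio] using this
  have part1 : (∫ ω in {ω | S ω < t ∧ t < ∑ j ∈ Finset.Icc l n, T j ω},
      (t - S ω) ∂(ℙ : Measure Ω)) = KEY := by
    have hmap : (∫ ω in {ω | S ω < t ∧ t < ∑ j ∈ Finset.Icc l n, T j ω},
        (t - S ω) ∂(ℙ : Measure Ω))
        = ∫ p in {p : ℝ × ℝ | p.1 < t ∧ t < p.1 + p.2}, (t - p.1) ∂(μ.prod ν) := by
      rw [hA_pre t, ← h_joint,
        setIntegral_map (f := fun p : ℝ × ℝ => t - p.1) (hE_meas t)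
          (Continuous.aestronglyMeasurable (continuous_const.sub continuous_fst))
          hφ.aemeasurable]
    rw [hmap, ← integral_indicator (hE_meas t)]
    have hFint : Integrable
        (Set.indicator {p : ℝ × ℝ | p.1 < t ∧ t < p.1 + p.2}
          (fun p => t - p.1)) (μ.prod ν) := by
      have hae : ∀ᵐ z ∂(μ.prod ν), 0 ≤ z.1 := by
        rw [ae_iff]
        have hset : {z : ℝ × ℝ | ¬ 0 ≤ z.1} = Set.Iio 0 ×ˢ Set.univ := by
          ext z; simp [not_le]
        rw [hset, Measure.prod_prod]
        simp [hμ0]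
      refine Integrable.mono' (integrable_const |t|) ?_ ?_
      · exact (Continuous.aestronglyMeasurable
          (continuous_const.sub continuous_fst)).indicator (hE_meas t)
      · filter_upwards [hae] with z hz
        by_cases hzE : z ∈ {p : ℝ × ℝ | p.1 < t ∧ t < p.1 + p.2}
        · rw [Set.indicator_of_mem hzE]
          have h1 : z.1 < t := hzE.1
          rw [Real.norm_eq_abs, abs_of_nonneg (by linarith)]
          calc t - z.1 ≤ t := by linarith
            _ ≤ |t| := le_abs_self t
        · rw [Set.indicator_of_notMem hzE]
          simp [abs_nonneg]
    rw [integral_prod _ hFint, hKEY_def]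
    refine integral_congr_ae ?_
    filter_upwards [h_nonneg_μ] with x hx
    by_cases hxt : x < t
    · have hsec : ∀ y : ℝ,
          Set.indicator {p : ℝ × ℝ | p.1 < t ∧ t < p.1 + p.2}
            (fun p => t - p.1) (x, y)
          = Set.indicator (Set.Ioi (t - x)) (fun _ => t - x) y := by
        intro y
        by_cases hy : t - x < y
        · rw [Set.indicator_of_mem
              (show (x, y) ∈ {p : ℝ × ℝ | p.1 < t ∧ t < p.1 + p.2} from
                ⟨hxt, show t < x + y by linarith⟩),
            Set.indicator_of_mem (Set.mem_Ioi.mpr hy)]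
        · rw [Set.indicator_of_notMem
              (show (x, y) ∉ _ from fun h => hy (by have := h.2; dsimp at this; linarith)),
            Set.indicator_of_notMem (fun h => hy (Set.mem_Ioi.mp h))]
      calc (∫ y, Set.indicator {p : ℝ × ℝ | p.1 < t ∧ t < p.1 + p.2}
              (fun p => t - p.1) (x, y) ∂ν)
          = ∫ y, Set.indicator (Set.Ioi (t - x)) (fun _ => t - x) y ∂ν :=
            integral_congr_ae (ae_of_all _ hsec)
        _ = (ν (Set.Ioi (t - x))).toReal • (t - x) := by
            rw [integral_indicator measurableSet_Ioi, setIntegral_const, measureReal_def]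
        _ = Set.indicator (Set.Ico 0 t)
              (fun x => (t - x) * Real.exp (-(c * (t - x)))) x := by
            rw [hν, expMeasure_Ioi hc (by linarith),
              ENNReal.toReal_ofReal (Real.exp_pos _).le,
              Set.indicator_of_mem (Set.mem_Ico.mpr ⟨hx, hxt⟩), smul_eq_mul]
            ring
    · have hzero : ∀ y : ℝ,
          Set.indicator {p : ℝ × ℝ | p.1 < t ∧ t < p.1 + p.2}
            (fun p => t - p.1) (x, y) = 0 := by
        intro y
        exact Set.indicator_of_notMem (fun h => hxt h.1) _
      simp only [hzero, integral_zero]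
      rw [Set.indicator_of_notMem (fun h => hxt (Set.mem_Ico.mp h).2)]
  have h_prob : ∀ τ : ℝ,
      (ℙ {ω | (∑ j ∈ Finset.Icc (l + 1) n, T j ω) < τ ∧
        τ < ∑ j ∈ Finset.Icc l n, T j ω}).toReal
      = ∫ x, Set.indicator (Set.Ico 0 τ) (fun x => Real.exp (-(c * (τ - x)))) x ∂μ := by
    intro τ
    show (ℙ {ω | S ω < τ ∧ τ < ∑ j ∈ Finset.Icc l n, T j ω}).toReal = _
    have h1 : ℙ {ω | S ω < τ ∧ τ < ∑ j ∈ Finset.Icc l n, T j ω}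
        = ∫⁻ x, ENNReal.ofReal (Set.indicator (Set.Ico 0 τ)
            (fun x => Real.exp (-(c * (τ - x)))) x) ∂μ := by
      rw [hA_pre τ, ← Measure.map_apply hφ (hE_meas τ), h_joint,
        Measure.prod_apply (hE_meas τ)]
      refine lintegral_congr_ae ?_
      filter_upwards [h_nonneg_μ] with x hx
      by_cases hxτ : x < τ
      · have hsec : (Prod.mk x ⁻¹' {p : ℝ × ℝ | p.1 < τ ∧ τ < p.1 + p.2})
            = Set.Ioi (τ - x) := by
          ext y
          simp only [Set.mem_preimage, Set.mem_setOf_eq, Set.mem_Ioi]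
          constructor
          · rintro ⟨_, h2⟩; linarith
          · intro h; exact ⟨hxτ, by linarith⟩
        rw [hsec, hν, expMeasure_Ioi hc (by linarith),
          Set.indicator_of_mem (Set.mem_Ico.mpr ⟨hx, hxτ⟩)]
      · have hsec : (Prod.mk x ⁻¹' {p : ℝ × ℝ | p.1 < τ ∧ τ < p.1 + p.2}) = ∅ := by
          ext y
          simp only [Set.mem_preimage, Set.mem_setOf_eq, Set.mem_empty_iff_false,
            iff_false]
          exact fun h => hxτ h.1
        rw [hsec, Set.indicator_of_notMem (fun h => hxτ (Set.mem_Ico.mp h).2)]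
        simp
    rw [h1]
    exact (integral_eq_lintegral_of_nonneg_ae
      (ae_of_all _ (Set.indicator_nonneg fun x _ => (Real.exp_pos _).le))
      ((Continuous.aestronglyMeasurable (by fun_prop)).indicator measurableSet_Ico)).symm
  have part2 : c⁻¹ * (∫ τ in Set.Ioc (0 : ℝ) t, f τ * Real.exp (-c * (t - τ))) = KEY := by
    set G : ℝ → ℝ → ℝ := fun τ x => Set.indicator {p : ℝ × ℝ | 0 ≤ p.2 ∧ p.2 < p.1}
        (fun p => Real.exp (-(c * (t - p.2)))) (τ, x) with hG_def
    have hGmeas : MeasurableSet {p : ℝ × ℝ | 0 ≤ p.2 ∧ p.2 < p.1} :=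
      (measurableSet_le measurable_const measurable_snd).inter
        (measurableSet_lt measurable_snd measurable_fst)
    have hstepA : ∀ τ : ℝ, f τ * Real.exp (-c * (t - τ)) = c * ∫ x, G τ x ∂μ := by
      intro τ
      rw [hf τ, h_prob τ, mul_assoc]
      congr 1
      rw [← integral_mul_const]
      refine integral_congr_ae (ae_of_all _ fun x => ?_)
      dsimp only
      by_cases hx : x ∈ Set.Ico 0 τ
      · rw [Set.indicator_of_mem hx]
        simp only [hG_def]
        rw [Set.indicator_of_mem (show (τ, x) ∈ {p : ℝ × ℝ | 0 ≤ p.2 ∧ p.2 < p.1} from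
            ⟨hx.1, hx.2⟩)]
        rw [← Real.exp_add]
        congr 1
        ring
      · rw [Set.indicator_of_notMem hx]
        simp only [hG_def]
        rw [Set.indicator_of_notMem (show (τ, x) ∉ {p : ℝ × ℝ | 0 ≤ p.2 ∧ p.2 < p.1} from
            fun h => hx (Set.mem_Ico.mpr ⟨h.1, h.2⟩))]
        simp
    have hGunc : Function.uncurry G = Set.indicator {p : ℝ × ℝ | 0 ≤ p.2 ∧ p.2 < p.1}
        (fun p => Real.exp (-(c * (t - p.2)))) := by
      funext p
      cases p
      rfl
    have hGint : Integrable (Function.uncurry G)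
        ((volume.restrict (Set.Ioc (0:ℝ) t)).prod μ) := by
      rw [hGunc]
      have hres : ∀ᵐ z : ℝ × ℝ ∂((volume.restrict (Set.Ioc (0:ℝ) t)).prod μ),
          z.1 ≤ t := by
        rw [ae_iff]
        have hset : {z : ℝ × ℝ | ¬ z.1 ≤ t} = Set.Ioi t ×ˢ Set.univ := by
          ext z; simp [not_le]
        rw [hset, Measure.prod_prod, Measure.restrict_apply measurableSet_Ioi]
        have hemp : Set.Ioi t ∩ Set.Ioc (0:ℝ) t = ∅ := by
          ext y
          simp only [Set.mem_inter_iff, Set.mem_Ioi, Set.mem_Ioc,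
            Set.mem_empty_iff_false, iff_false]
          rintro ⟨h1, _, h3⟩
          linarith
        simp [hemp]
      refine Integrable.mono' (integrable_const 1)
        ((Continuous.aestronglyMeasurable (by fun_prop)).indicator hGmeas) ?_
      filter_upwards [hres] with z hz
      by_cases hzm : z ∈ {p : ℝ × ℝ | 0 ≤ p.2 ∧ p.2 < p.1}
      · have hzm' : 0 ≤ z.2 ∧ z.2 < z.1 := hzm
        rw [Set.indicator_of_mem hzm, Real.norm_eq_abs,
          abs_of_nonneg (Real.exp_pos _).le]
        have h1 : 0 ≤ t - z.2 := by
          obtain ⟨h3, h2⟩ := hzm'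
          linarith
        have h2 : -(c * (t - z.2)) ≤ 0 := by nlinarith
        calc rexp (-(c * (t - z.2))) ≤ rexp 0 := Real.exp_le_exp.mpr h2
          _ = 1 := Real.exp_zero
      · rw [Set.indicator_of_notMem hzm]
        simp
    calc c⁻¹ * (∫ τ in Set.Ioc (0:ℝ) t, f τ * Real.exp (-c * (t - τ)))
        = c⁻¹ * (∫ τ in Set.Ioc (0:ℝ) t, c * ∫ x, G τ x ∂μ) := by
          rw [integral_congr_ae (ae_of_all _ fun τ => hstepA τ)]
      _ = ∫ τ in Set.Ioc (0:ℝ) t, ∫ x, G τ x ∂μ := by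
          rw [integral_const_mul, ← mul_assoc, inv_mul_cancel₀ (ne_of_gt hc), one_mul]
      _ = ∫ x, (∫ τ in Set.Ioc (0:ℝ) t, G τ x) ∂μ := integral_integral_swap hGint
      _ = KEY := by
          rw [hKEY_def]
          refine integral_congr_ae (ae_of_all _ fun x => ?_)
          dsimp only
          by_cases hx0 : 0 ≤ x
          · have hGx : ∀ τ, G τ x
                = Set.indicator (Set.Ioi x) (fun _ => Real.exp (-(c * (t - x)))) τ := by
              intro τ
              by_cases hτ : x < τ
              · simp only [hG_def]
                rw [Set.indicator_of_mem (show (τ, x) ∈ {p : ℝ × ℝ | 0 ≤ p.2 ∧ p.2 < p.1}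
                    from ⟨hx0, hτ⟩),
                  Set.indicator_of_mem (Set.mem_Ioi.mpr hτ)]
              · simp only [hG_def]
                rw [Set.indicator_of_notMem
                    (show (τ, x) ∉ {p : ℝ × ℝ | 0 ≤ p.2 ∧ p.2 < p.1} from
                      fun h => hτ (show ((τ, x).2 : ℝ) < (τ, x).1 from h.2)),
                  Set.indicator_of_notMem (fun h => hτ (Set.mem_Ioi.mp h))]
            rw [integral_congr_ae (ae_of_all _ fun τ => hGx τ),
              setIntegral_indicator measurableSet_Ioi, setIntegral_const]
            have hint : Set.Ioc (0:ℝ) t ∩ Set.Ioi x = Set.Ioc x t := by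
              ext τ
              simp only [Set.mem_inter_iff, Set.mem_Ioc, Set.mem_Ioi]
              constructor
              · rintro ⟨⟨_, h2⟩, h3⟩; exact ⟨h3, h2⟩
              · rintro ⟨h1, h2⟩; exact ⟨⟨lt_of_le_of_lt hx0 h1, h2⟩, h1⟩
            rw [hint, measureReal_def, Real.volume_Ioc]
            by_cases hxt : x < t
            · rw [ENNReal.toReal_ofReal (by linarith),
                Set.indicator_of_mem (Set.mem_Ico.mpr ⟨hx0, hxt⟩), smul_eq_mul]
            · rw [Set.indicator_of_notMem (fun h => hxt (Set.mem_Ico.mp h).2),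
                ENNReal.ofReal_of_nonpos (by linarith [not_lt.mp hxt])]
              simp
          · have hGx : ∀ τ, G τ x = 0 := by
              intro τ
              simp only [hG_def]
              refine Set.indicator_of_notMem ?_ _
              intro h
              have h' : (0:ℝ) ≤ x ∧ x < τ := h
              exact hx0 h'.1
            simp only [hGx, integral_zero]
            rw [Set.indicator_of_notMem (fun h => hx0 (Set.mem_Ico.mp h).1)]
  exact part1.trans part2.symm
end

section
/- For independent exponential random variables T_n,...,T_2 with rates binom(k,2), the probability Q_1 of more than one mutation, Q_1 = E[1 - e^{-(θ/2)Σ_{k=2}^n k T_k} (1 + (θ/2)Σ_{k=2}^n k T_k)], equals 1 - Π_{l=1}^{n-1}(1 + θ/l)^{-1} · (1 + θ Σ_{k=1}^{n-1} 1/(k+θ)). -/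
open MeasureTheory ProbabilityTheory Finset Real

lemma expPDFReal_eq (r x : ℝ) :
    exponentialPDFReal r x = if 0 ≤ x then r * Real.exp (-(r * x)) else 0 := by
  rw [exponentialPDFReal, gammaPDFReal]
  simp only [rpow_one, Real.Gamma_one, div_one, sub_self, Real.rpow_zero, mul_one]

lemma integral_expMeasure {r : ℝ} (hr : 0 < r) (φ : ℝ → ℝ) :
    ∫ x, φ x ∂(expMeasure r) = ∫ x in Set.Ioi (0:ℝ), r * Real.exp (-(r * x)) * φ x := by
  have h1 : expMeasure r
      = MeasureTheory.Measure.withDensity MeasureTheory.volume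
        (fun x => ((exponentialPDFReal r x).toNNReal : ENNReal)) := rfl
  rw [h1, integral_withDensity_eq_integral_smul
    ((measurable_exponentialPDFReal r).real_toNNReal)]
  have h2 : ∀ x : ℝ, (exponentialPDFReal r x).toNNReal • φ x
      = Set.indicator (Set.Ici 0) (fun x => r * Real.exp (-(r * x)) * φ x) x := by
    intro x
    rw [NNReal.smul_def, smul_eq_mul, Real.coe_toNNReal _ (exponentialPDFReal_nonneg hr x),
      expPDFReal_eq]
    by_cases hx : 0 ≤ x
    · rw [if_pos hx, Set.indicator_apply, if_pos (Set.mem_Ici.mpr hx)]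
    · rw [if_neg hx, Set.indicator_apply, if_neg (by simpa using hx), zero_mul]
  simp_rw [h2]
  rw [MeasureTheory.integral_indicator measurableSet_Ici,
    MeasureTheory.integral_Ici_eq_integral_Ioi]

lemma integral_exp_expMeasure {r a : ℝ} (hr : 0 < r) (ha : 0 ≤ a) :
    ∫ x, Real.exp (-(a * x)) ∂(expMeasure r) = r / (r + a) := by
  rw [integral_expMeasure hr]
  have hc : 0 < r + a := by linarith
  have key : ∫ x in Set.Ioi (0:ℝ), x ^ ((1:ℝ) - 1) * Real.exp (-((r + a) * x))
      = (1 / (r + a)) ^ (1:ℝ) * Real.Gamma 1 :=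
    integral_rpow_mul_exp_neg_mul_Ioi one_pos hc
  simp only [sub_self, Real.rpow_zero, one_mul, Real.rpow_one, Real.Gamma_one, mul_one] at key
  calc ∫ x in Set.Ioi (0:ℝ), r * Real.exp (-(r * x)) * Real.exp (-(a * x))
      = ∫ x in Set.Ioi (0:ℝ), r * Real.exp (-((r + a) * x)) := by
        congr 1; funext x
        calc r * Real.exp (-(r * x)) * Real.exp (-(a * x))
            = r * Real.exp (-(r * x) + -(a * x)) := by rw [Real.exp_add]; ring
          _ = r * Real.exp (-((r + a) * x)) := by ring_nf
    _ = r * (1 / (r + a)) := by rw [MeasureTheory.integral_const_mul, key]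
    _ = r / (r + a) := by ring

lemma integral_id_exp_expMeasure {r a : ℝ} (hr : 0 < r) (ha : 0 ≤ a) :
    ∫ x, x * Real.exp (-(a * x)) ∂(expMeasure r) = r / (r + a) ^ 2 := by
  rw [integral_expMeasure hr]
  have hc : 0 < r + a := by linarith
  have key : ∫ x in Set.Ioi (0:ℝ), x ^ ((2:ℝ) - 1) * Real.exp (-((r + a) * x))
      = (1 / (r + a)) ^ (2:ℝ) * Real.Gamma 2 :=
    integral_rpow_mul_exp_neg_mul_Ioi two_pos hc
  have h21 : ((2:ℝ) - 1) = (1:ℝ) := by norm_num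
  rw [h21, Real.Gamma_two, mul_one] at key
  simp only [Real.rpow_one] at key
  have hpow : (1 / (r + a)) ^ (2:ℝ) = 1 / (r + a) ^ 2 := by
    rw [show (2:ℝ) = ((2:ℕ):ℝ) by norm_num, Real.rpow_natCast, div_pow, one_pow]
  rw [hpow] at key
  calc ∫ x in Set.Ioi (0:ℝ), r * Real.exp (-(r * x)) * (x * Real.exp (-(a * x)))
      = ∫ x in Set.Ioi (0:ℝ), r * (x * Real.exp (-((r + a) * x))) := by
        congr 1; funext x
        calc r * Real.exp (-(r * x)) * (x * Real.exp (-(a * x)))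
            = r * (x * Real.exp (-(r * x) + -(a * x))) := by rw [Real.exp_add]; ring
          _ = r * (x * Real.exp (-((r + a) * x))) := by ring_nf
    _ = r * (1 / (r + a) ^ 2) := by rw [MeasureTheory.integral_const_mul, key]
    _ = r / (r + a) ^ 2 := by ring

lemma integral_prod_comp {Ω : Type*} [MeasureSpace Ω] [IsProbabilityMeasure (ℙ : Measure Ω)]
    (T : ℕ → Ω → ℝ) (hmeas : ∀ j, Measurable (T j))
    (hindep : iIndepFun T ℙ)
    (φ : ℕ → ℝ → ℝ) (hφ : ∀ i, Measurable (φ i)) (s : Finset ℕ) :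
    ∫ ω, ∏ i ∈ s, φ i (T i ω) ∂ℙ = ∏ i ∈ s, ∫ ω, φ i (T i ω) ∂ℙ := by
  classical
  set g : ℕ → Ω → ℝ := fun i ω => φ i (T i ω) with hg
  have hgmeas : ∀ i, Measurable (g i) := fun i => (hφ i).comp (hmeas i)
  have hgindep : iIndepFun g ℙ :=
    hindep.comp φ hφ
  induction s using Finset.induction_on with
  | empty => simp
  | @insert j s' hj ih =>
    have hprod : (fun ω => ∏ i ∈ s', φ i (T i ω)) = ∏ i ∈ s', g i := by
      funext ω; rw [Finset.prod_apply]
    have hIndep : IndepFun (∏ i ∈ s', g i) (g j) ℙ :=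
      hgindep.indepFun_finsetProd_of_notMem hgmeas hj
    simp_rw [Finset.prod_insert hj]
    rw [← ih]
    have hpm : Measurable (∏ i ∈ s', g i) := by
      rw [show (∏ i ∈ s', g i) = fun ω => ∏ i ∈ s', g i ω from funext fun ω => Finset.prod_apply ..]
      exact Finset.measurable_prod s' (fun i _ => hgmeas i)
    have key : integral ℙ (g j * ∏ i ∈ s', g i)
        = integral ℙ (g j) * integral ℙ (∏ i ∈ s', g i) :=
      IndepFun.integral_mul_eq_mul_integral hIndep.symm (hgmeas j).aestronglyMeasurable hpm.aestronglyMeasurable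
    calc ∫ ω, φ j (T j ω) * ∏ i ∈ s', φ i (T i ω) ∂ℙ
        = integral ℙ (g j * ∏ i ∈ s', g i) := by
          congr 1; funext ω; rw [Pi.mul_apply, Finset.prod_apply]
      _ = integral ℙ (g j) * integral ℙ (∏ i ∈ s', g i) := key
      _ = (∫ ω, φ j (T j ω) ∂ℙ) * ∫ ω, ∏ i ∈ s', φ i (T i ω) ∂ℙ := by
          congr 1; congr 1; funext ω; rw [Finset.prod_apply]
/-- For independent exponential random variables `T_n, ..., T_2` with rates `binom(k,2)` and
mutation rate `θ > 0`, the probability of more than one mutation on the coalescent tree,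
`Q_1 = E[1 - e^{-(θ/2)Σ_{k=2}^n k T_k}(1 + (θ/2)Σ_{k=2}^n k T_k)]`, equals
`1 - Π_{l=1}^{n-1}(1 + θ/l)⁻¹ · (1 + θ Σ_{k=1}^{n-1} 1/(k+θ))`. -/
theorem prob_more_than_one_mutation (n : ℕ) (hn : 2 ≤ n) (θ : ℝ) (hθ : 0 < θ)
    (Ω : Type*) [MeasureSpace Ω] [IsProbabilityMeasure (ℙ : Measure Ω)]
    (T : ℕ → Ω → ℝ) (hmeas : ∀ j, Measurable (T j))
    (hindep : iIndepFun T ℙ)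
    (hexp : ∀ j, 2 ≤ j → j ≤ n →
      Measure.map (T j) ℙ = expMeasure ((j.choose 2 : ℝ))) :
    (∫ ω, (1 - Real.exp (-(θ / 2) * ∑ k ∈ Finset.Icc 2 n, (k : ℝ) * T k ω) *
        (1 + (θ / 2) * ∑ k ∈ Finset.Icc 2 n, (k : ℝ) * T k ω)) ∂ℙ) =
      1 - (∏ l ∈ Finset.Icc 1 (n - 1), (1 + θ / (l : ℝ)))⁻¹ *
        (1 + θ * ∑ k ∈ Finset.Icc 1 (n - 1), 1 / ((k : ℝ) + θ)) := by
  classical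
  obtain ⟨S, hS⟩ : ∃ S : Finset ℕ, S = Finset.Icc 2 n := ⟨_, rfl⟩
  rw [← hS]
  obtain ⟨s, hs_def⟩ : ∃ s : ℝ, s = θ / 2 := ⟨_, rfl⟩
  have hs : 0 < s := by rw [hs_def]; positivity
  obtain ⟨T', hT'⟩ : ∃ T' : ℕ → Ω → ℝ, T' = fun k ω => max (T k ω) 0 := ⟨_, rfl⟩
  have hmeas' : ∀ k, Measurable (T' k) := fun k => by
    rw [hT']; exact (hmeas k).max measurable_const
  have hindep' : iIndepFun T' ℙ := by
    rw [hT']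
    exact hindep.comp (fun _ x => max x 0) (fun _ => measurable_id.max measurable_const)
  have hT'nonneg : ∀ k ω, 0 ≤ T' k ω := fun k ω => by rw [hT']; exact le_max_right _ _
  have hexp0 : ∀ r : ℝ, expMeasure r (Set.Iio 0) = 0 := by
    intro r
    rw [expMeasure, gammaMeasure, withDensity_apply _ measurableSet_Iio]
    exact lintegral_gammaPDF_of_nonpos le_rfl
  have hae : ∀ k ∈ S, ∀ᵐ ω ∂(ℙ : Measure Ω), 0 ≤ T k ω := by
    intro k hk
    rw [hS, Finset.mem_Icc] at hk
    rw [ae_iff]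
    have h1 : {ω | ¬0 ≤ T k ω} = T k ⁻¹' Set.Iio 0 := by
      ext ω; simp [not_le]
    rw [h1, ← Measure.map_apply (hmeas k) measurableSet_Iio, hexp k hk.1 hk.2]
    exact hexp0 _
  have hae_all : ∀ᵐ ω ∂(ℙ : Measure Ω), ∀ k ∈ S, 0 ≤ T k ω :=
    (ae_ball_iff S.countable_toSet).mpr hae
  have hmap' : ∀ k ∈ S, Measure.map (T' k) ℙ = expMeasure ((k.choose 2 : ℝ)) := by
    intro k hk
    have haek : T' k =ᵐ[ℙ] T k := by
      filter_upwards [hae k hk] with ω hω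
      rw [hT']; exact max_eq_left hω
    rw [hS, Finset.mem_Icc] at hk
    rw [Measure.map_congr haek, hexp k hk.1 hk.2]
  have hcongr : (∫ ω, (1 - Real.exp (-(θ / 2) * ∑ k ∈ S, (k : ℝ) * T k ω) *
        (1 + (θ / 2) * ∑ k ∈ S, (k : ℝ) * T k ω)) ∂ℙ)
      = ∫ ω, (1 - Real.exp (-(θ / 2) * ∑ k ∈ S, (k : ℝ) * T' k ω) *
        (1 + (θ / 2) * ∑ k ∈ S, (k : ℝ) * T' k ω)) ∂ℙ := by
    apply integral_congr_ae
    filter_upwards [hae_all] with ω hω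
    have hsum : ∑ k ∈ S, (k : ℝ) * T k ω = ∑ k ∈ S, (k : ℝ) * T' k ω :=
      Finset.sum_congr rfl fun k hk => by rw [hT']; simp [max_eq_left (hω k hk)]

    rw [hsum]
  rw [hcongr]
  obtain ⟨u, hu_def⟩ : ∃ u : Ω → ℝ, u = fun ω => ∑ k ∈ S, s * k * T' k ω := ⟨_, rfl⟩
  have hu_eq : ∀ ω, (θ / 2) * ∑ k ∈ S, (k : ℝ) * T' k ω = u ω := by
    intro ω
    rw [hu_def, Finset.mul_sum]
    exact Finset.sum_congr rfl fun k _ => by rw [hs_def]; ring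
  have hu_nonneg : ∀ ω, 0 ≤ u ω := fun ω => by
    rw [hu_def]
    exact Finset.sum_nonneg fun k _ => mul_nonneg (by positivity) (hT'nonneg k ω)
  have hu_meas : Measurable u := by
    rw [hu_def]
    exact Finset.measurable_sum S fun k _ => (hmeas' k).const_mul _
  have hrewrite : ∀ ω, (1 - Real.exp (-(θ / 2) * ∑ k ∈ S, (k : ℝ) * T' k ω) *
        (1 + (θ / 2) * ∑ k ∈ S, (k : ℝ) * T' k ω))
      = 1 - (Real.exp (-u ω) + u ω * Real.exp (-u ω)) := by
    intro ω
    rw [neg_mul, hu_eq ω]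
    ring
  simp_rw [hrewrite]
  have exp_bound : ∀ v : ℝ, 0 ≤ v → v * Real.exp (-v) ≤ 1 := by
    intro v hv
    have h1 : v + 1 ≤ Real.exp v := Real.add_one_le_exp v
    have h2 : Real.exp (-v) * Real.exp v = 1 := by rw [← Real.exp_add]; simp
    nlinarith [Real.exp_pos (-v), Real.exp_pos v]
  have exp_le_one : ∀ v : ℝ, 0 ≤ v → Real.exp (-v) ≤ 1 :=
    fun v hv => Real.exp_le_one_iff.mpr (by linarith)
  have int1 : Integrable (fun ω => Real.exp (-u ω)) ℙ := by
    apply (integrable_const (1:ℝ)).mono' (hu_meas.neg.exp.aestronglyMeasurable)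
    refine ae_of_all _ fun ω => ?_
    rw [Real.norm_eq_abs, abs_of_nonneg (Real.exp_pos _).le]
    exact exp_le_one _ (hu_nonneg ω)
  have int2 : Integrable (fun ω => u ω * Real.exp (-u ω)) ℙ := by
    apply (integrable_const (1:ℝ)).mono' ((hu_meas.mul hu_meas.neg.exp).aestronglyMeasurable)
    refine ae_of_all _ fun ω => ?_
    rw [Real.norm_eq_abs, Pi.mul_apply, Pi.neg_apply, abs_of_nonneg (mul_nonneg (hu_nonneg ω) (Real.exp_pos _).le)]
    exact exp_bound _ (hu_nonneg ω)
  have int3 : Integrable (fun ω => Real.exp (-u ω) + u ω * Real.exp (-u ω)) ℙ :=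
    int1.add int2
  rw [integral_sub (integrable_const 1) int3, integral_const, probReal_univ,
    integral_add int1 int2]
  simp only [ENNReal.toReal_one, smul_eq_mul, mul_one, one_smul]
  obtain ⟨φf, hφf⟩ : ∃ φf : ℕ → ℝ → ℝ, φf = fun (k : ℕ) (t : ℝ) => Real.exp (-(s * k * t)) := ⟨_, rfl⟩
  have hφf_meas : ∀ k, Measurable (φf k) := fun k => by
    rw [hφf]; exact (measurable_id.const_mul _).neg.exp
  obtain ⟨ψ, hψ⟩ : ∃ ψ : ℕ → ℕ → ℝ → ℝ,
      ψ = fun (j k : ℕ) (t : ℝ) => (if k = j then s * j * t else 1) * Real.exp (-(s * k * t)) := ⟨_, rfl⟩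
  have hψ_meas : ∀ j k, Measurable (ψ j k) := by
    intro j k
    rw [hψ]
    apply Measurable.mul _ ((measurable_id.const_mul _).neg.exp)
    split_ifs
    · exact measurable_id.const_mul _
    · exact measurable_const
  have hchoose_pos : ∀ k ∈ S, (0:ℝ) < (k.choose 2 : ℝ) := by
    intro k hk
    rw [hS, Finset.mem_Icc] at hk
    exact_mod_cast Nat.choose_pos hk.1
  have hk2 : ∀ k ∈ S, (2:ℝ) ≤ (k:ℝ) := by
    intro k hk; rw [hS, Finset.mem_Icc] at hk; exact_mod_cast hk.1
  obtain ⟨E, hE⟩ : ∃ E : ℕ → ℝ, E = fun (k : ℕ) => ((k:ℝ) - 1) / ((k:ℝ) - 1 + θ) := ⟨_, rfl⟩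
  have halg : ∀ k ∈ S,
      (k.choose 2 : ℝ) / ((k.choose 2 : ℝ) + s * k) = E k ∧
      s * k * ((k.choose 2 : ℝ) / ((k.choose 2 : ℝ) + s * k) ^ 2)
        = θ / ((k:ℝ) - 1 + θ) * E k := by
    intro k hk
    have hx : (2:ℝ) ≤ (k:ℝ) := hk2 k hk
    have hc : (k.choose 2 : ℝ) = (k:ℝ) * ((k:ℝ) - 1) / 2 := Nat.cast_choose_two ℝ k
    have hd1 : (0:ℝ) < (k:ℝ) - 1 + θ := by linarith
    have hk0 : (0:ℝ) < (k:ℝ) := by linarith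
    have hsk : (0:ℝ) < s * k := mul_pos hs hk0
    have hd2 : (0:ℝ) < (k.choose 2 : ℝ) + s * k := by
      linarith [hchoose_pos k hk]
    have hsq : (0:ℝ) < ((k.choose 2 : ℝ) + s * k) ^ 2 := by positivity
    have hsq2 : (0:ℝ) < ((k:ℝ) - 1 + θ) * ((k:ℝ) - 1 + θ) := by positivity
    constructor
    · rw [hE]
      rw [div_eq_div_iff hd2.ne' hd1.ne']
      rw [hc, hs_def]; ring
    · rw [hE]
      rw [div_mul_div_comm, mul_div_assoc', div_eq_div_iff hsq.ne' hsq2.ne']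
      rw [hc, hs_def]; ring
  have hsingle_exp : ∀ k ∈ S, ∫ ω, φf k (T' k ω) ∂ℙ = E k := by
    intro k hk
    rw [← MeasureTheory.integral_map (hmeas' k).aemeasurable
      (hφf_meas k).aestronglyMeasurable, hmap' k hk]
    have h1 : ∫ x, φf k x ∂(expMeasure ((k.choose 2 : ℝ)))
        = (k.choose 2 : ℝ) / ((k.choose 2 : ℝ) + s * k) := by
      simp only [hφf]
      exact integral_exp_expMeasure (hchoose_pos k hk) (by positivity)
    rw [h1, (halg k hk).1]
  have hsingle_x : ∀ j ∈ S, ∫ ω, ψ j j (T' j ω) ∂ℙ = θ / ((j:ℝ) - 1 + θ) * E j := by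
    intro j hj
    rw [← MeasureTheory.integral_map (hmeas' j).aemeasurable
      (hψ_meas j j).aestronglyMeasurable, hmap' j hj]
    have hpt : ∀ x : ℝ, ψ j j x = (s * j) * (x * Real.exp (-(s * j * x))) := by
      intro x; simp only [hψ, eq_self_iff_true, if_true]; ring
    simp_rw [hpt]
    rw [MeasureTheory.integral_const_mul,
      integral_id_exp_expMeasure (hchoose_pos j hj) (by positivity)]
    exact (halg j hj).2
  have hA : ∫ ω, Real.exp (-u ω) ∂ℙ = ∏ k ∈ S, E k := by
    have hpt : ∀ ω, Real.exp (-u ω) = ∏ k ∈ S, φf k (T' k ω) := by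
      intro ω
      simp only [hu_def, hφf, ← Finset.sum_neg_distrib, Real.exp_sum]
    simp_rw [hpt]
    rw [integral_prod_comp T' hmeas' hindep' φf hφf_meas S]
    exact Finset.prod_congr rfl fun k hk => hsingle_exp k hk
  have hB : ∫ ω, u ω * Real.exp (-u ω) ∂ℙ
      = (∑ j ∈ S, θ / ((j:ℝ) - 1 + θ)) * ∏ k ∈ S, E k := by
    have hpt : ∀ ω, u ω * Real.exp (-u ω)
        = ∑ j ∈ S, (s * j * T' j ω) * Real.exp (-u ω) := by
      intro ω
      simp only [hu_def]
      rw [Finset.sum_mul]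
    have hterm_bound : ∀ j ∈ S, ∀ ω,
        ‖(s * j * T' j ω) * Real.exp (-u ω)‖ ≤ 1 := by
      intro j hj ω
      have hv : 0 ≤ s * j * T' j ω := mul_nonneg (by positivity) (hT'nonneg j ω)
      have hvu : s * j * T' j ω ≤ u ω := by
        simp only [hu_def]
        exact Finset.single_le_sum (f := fun (k : ℕ) => s * (k:ℝ) * T' k ω)
          (fun k _ => mul_nonneg (mul_nonneg hs.le (Nat.cast_nonneg k)) (hT'nonneg k ω)) hj
      rw [Real.norm_eq_abs, abs_of_nonneg (mul_nonneg hv (Real.exp_pos _).le)]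
      calc (s * j * T' j ω) * Real.exp (-u ω)
          ≤ (s * j * T' j ω) * Real.exp (-(s * j * T' j ω)) := by
            apply mul_le_mul_of_nonneg_left _ hv
            exact Real.exp_le_exp.mpr (by linarith)
        _ ≤ 1 := exp_bound _ hv
    have hterm_int : ∀ j ∈ S, Integrable (fun ω => (s * j * T' j ω) * Real.exp (-u ω)) ℙ := by
      intro j hj
      apply (integrable_const (1:ℝ)).mono'
        (((hmeas' j).const_mul _).mul hu_meas.neg.exp).aestronglyMeasurable
      exact ae_of_all _ (hterm_bound j hj)
    simp_rw [hpt]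
    rw [MeasureTheory.integral_finset_sum S hterm_int]
    rw [Finset.sum_mul]
    refine Finset.sum_congr rfl fun j hj => ?_
    have hexpand : ∀ ω, (s * j * T' j ω) * Real.exp (-u ω)
        = ∏ k ∈ S, ψ j k (T' k ω) := by
      intro ω
      have h1 : ∀ k, ψ j k (T' k ω)
          = (if k = j then s * j * T' k ω else 1) * Real.exp (-(s * k * T' k ω)) := by
        intro k; simp only [hψ]
      simp_rw [h1]
      rw [Finset.prod_mul_distrib, Finset.prod_ite_eq' S j (fun k => s * j * T' k ω),
        if_pos hj]
      congr 1
      simp only [hu_def, ← Finset.sum_neg_distrib, Real.exp_sum]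
    simp_rw [hexpand]
    rw [integral_prod_comp T' hmeas' hindep' (ψ j) (hψ_meas j) S]
    rw [← Finset.mul_prod_erase S _ hj]
    have herase : ∏ k ∈ S.erase j, ∫ ω, ψ j k (T' k ω) ∂ℙ = ∏ k ∈ S.erase j, E k := by
      refine Finset.prod_congr rfl fun k hk => ?_
      have hkj : k ≠ j := Finset.ne_of_mem_erase hk
      have h2 : ∀ ω, ψ j k (T' k ω) = φf k (T' k ω) := by
        intro ω; simp only [hψ, hφf, if_neg hkj, one_mul]
      simp_rw [h2]
      exact hsingle_exp k (Finset.mem_of_mem_erase hk)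
    rw [herase, hsingle_x j hj, mul_assoc, Finset.mul_prod_erase S E hj]
  rw [hA, hB]
  have hmapIcc : S = Finset.map ⟨fun l => l + 1, add_left_injective 1⟩ (Finset.Icc 1 (n-1)) := by
    ext k
    simp only [hS, Finset.mem_Icc, Finset.mem_map, Function.Embedding.coeFn_mk]
    constructor
    · rintro ⟨h1, h2⟩
      exact ⟨k - 1, ⟨by omega, by omega⟩, show k - 1 + 1 = k by omega⟩
    · rintro ⟨l, ⟨h1, h2⟩, hlk⟩
      have hlk' : l + 1 = k := hlk
      omega
  have hP : ∏ k ∈ S, E k = (∏ l ∈ Finset.Icc 1 (n - 1), (1 + θ / (l : ℝ)))⁻¹ := by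
    rw [hmapIcc, Finset.prod_map, ← Finset.prod_inv_distrib]
    refine Finset.prod_congr rfl fun l hl => ?_
    rw [Finset.mem_Icc] at hl
    have hl1 : (1:ℝ) ≤ (l:ℝ) := by exact_mod_cast hl.1
    have hl0 : (l:ℝ) ≠ 0 := by linarith
    rw [hE]
    simp only [Function.Embedding.coeFn_mk]
    push_cast
    rw [add_sub_cancel_right]
    have h3 : 1 + θ / (l:ℝ) = ((l:ℝ) + θ) / l := by field_simp
    rw [h3, inv_div]
  have hSum : ∑ j ∈ S, θ / ((j:ℝ) - 1 + θ)
      = θ * ∑ k ∈ Finset.Icc 1 (n - 1), 1 / ((k : ℝ) + θ) := by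
    rw [hmapIcc, Finset.sum_map, Finset.mul_sum]
    refine Finset.sum_congr rfl fun l hl => ?_
    simp only [Function.Embedding.coeFn_mk]
    push_cast
    rw [add_sub_cancel_right]
    ring
  rw [hP, hSum]
  ring
end

section
/- Suppose n → ∞ and θ → 0 with θ log n → α for some α ≥ 0. Then Q_1(n, θ) = 1 - Π_{l=1}^{n-1}(1 + θ/l)^{-1} · (1 + θ Σ_{k=1}^{n-1} 1/(k+θ)) converges to 1 - e^{-α}(1 + α). In particular, if θ log n → 0 then Q_1 → 0, and if θ log n → ∞ then Q_1 → 1. -/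
open Finset Filter Real

/-- The probability of at least two mutations in a Kingman coalescent tree of `n` leaves
with mutation rate `θ/2` per unit edge length. -/
noncomputable def Q1 (n : ℕ) (θ : ℝ) : ℝ :=
  1 - (∏ l ∈ Finset.Icc 1 (n - 1), (1 + θ / (l : ℝ)))⁻¹ *
    (1 + θ * ∑ k ∈ Finset.Icc 1 (n - 1), 1 / ((k : ℝ) + θ))

/- Auxiliary definitions and lemmas -/

noncomputable def Pf (n : ℕ) (t : ℝ) : ℝ := ∏ l ∈ Finset.Icc 1 (n - 1), (1 + t / (l : ℝ))
noncomputable def Sf (n : ℕ) (t : ℝ) : ℝ := ∑ k ∈ Finset.Icc 1 (n - 1), 1 / ((k : ℝ) + t)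
noncomputable def Hf (n : ℕ) : ℝ := ∑ k ∈ Finset.Icc 1 (n - 1), 1 / (k : ℝ)

lemma Q1_eq (n : ℕ) (t : ℝ) : Q1 n t = 1 - (Pf n t)⁻¹ * (1 + t * Sf n t) := rfl

lemma aux_sum_sq' : ∀ m : ℕ, 1 ≤ m → ∑ l ∈ Finset.Icc 1 m, (1:ℝ)/(l:ℝ)^2 ≤ 2 - 1/m := by
  intro m
  induction m with
  | zero => omega
  | succ m ih =>
    intro _
    rcases Nat.eq_zero_or_pos m with h0 | h1
    · subst h0; norm_num
    rw [Finset.sum_Icc_succ_top (by omega)]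
    have h2 := ih h1
    have hm : (1:ℝ) ≤ (m:ℝ) := by exact_mod_cast h1
    have key : ∑ l ∈ Finset.Icc 1 m, (1:ℝ)/(l:ℝ)^2 + 1/((m:ℝ)+1)^2 ≤ 2 - 1/((m:ℝ)+1) := by
      have : (1:ℝ)/((m:ℝ)+1)^2 ≤ 1/(m:ℝ) - 1/((m:ℝ)+1) := by
        rw [div_sub_div _ _ (by linarith) (by linarith)]
        rw [div_le_div_iff₀ (by positivity) (by positivity)]
        nlinarith
      linarith
    push_cast
    linarith

lemma aux_sum_sq (m : ℕ) : ∑ l ∈ Finset.Icc 1 m, (1:ℝ)/(l:ℝ)^2 ≤ 2 := by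
  rcases Nat.eq_zero_or_pos m with h0 | h1
  · subst h0; simp
  have h : (0:ℝ) < 1/(m:ℝ) := by positivity
  linarith [aux_sum_sq' m h1]

lemma aux_log_le {x : ℝ} (hx : 0 ≤ x) : Real.log (1+x) ≤ x := by
  have := Real.log_le_sub_one_of_pos (show (0:ℝ) < 1 + x by linarith)
  linarith

lemma aux_le_log {x : ℝ} (hx : 0 ≤ x) : x - x^2 ≤ Real.log (1+x) := by
  rw [Real.le_log_iff_exp_le (by linarith)]
  have h2 : (x^2 - x) + 1 ≤ Real.exp (x^2 - x) := Real.add_one_le_exp _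
  have h3 : Real.exp (x - x^2) = (Real.exp (x^2-x))⁻¹ := by
    rw [← Real.exp_neg]; ring_nf
  rw [h3, inv_le_iff_one_le_mul₀ (Real.exp_pos _)]
  nlinarith [Real.exp_pos (x^2 - x)]

lemma Pf_pos (n : ℕ) {t : ℝ} (ht : 0 ≤ t) : 0 < Pf n t := by
  refine Finset.prod_pos (fun l hl => ?_)
  have hl1 : 1 ≤ l := (Finset.mem_Icc.mp hl).1
  have hlp : (0:ℝ) < l := by exact_mod_cast hl1
  positivity

lemma log_Pf_bounds (n : ℕ) {t : ℝ} (ht : 0 ≤ t) :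
    t * Hf n - 2*t^2 ≤ Real.log (Pf n t) ∧ Real.log (Pf n t) ≤ t * Hf n := by
  have hfac : ∀ l ∈ Finset.Icc 1 (n-1), (0:ℝ) < 1 + t/(l:ℝ) := by
    intro l hl
    have hl1 : 1 ≤ l := (Finset.mem_Icc.mp hl).1
    have hlp : (0:ℝ) < l := by exact_mod_cast hl1
    positivity
  have hlog : Real.log (Pf n t) = ∑ l ∈ Finset.Icc 1 (n-1), Real.log (1 + t/(l:ℝ)) :=
    Real.log_prod (fun l hl => (hfac l hl).ne')
  have hHf : t * Hf n = ∑ l ∈ Finset.Icc 1 (n-1), t/(l:ℝ) := by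
    rw [Hf, Finset.mul_sum]; exact Finset.sum_congr rfl (fun l _ => by ring)
  constructor
  · have h1 : ∑ l ∈ Finset.Icc 1 (n-1), (t/(l:ℝ) - (t/(l:ℝ))^2) ≤ Real.log (Pf n t) := by
      rw [hlog]
      refine Finset.sum_le_sum (fun l hl => ?_)
      have hl1 : 1 ≤ l := (Finset.mem_Icc.mp hl).1
      have hlp : (0:ℝ) < l := by exact_mod_cast hl1
      exact aux_le_log (by positivity)
    have h2 : ∑ l ∈ Finset.Icc 1 (n-1), (t/(l:ℝ))^2 ≤ 2*t^2 := by
      have heq : ∑ l ∈ Finset.Icc 1 (n-1), (t/(l:ℝ))^2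
          = t^2 * ∑ l ∈ Finset.Icc 1 (n-1), (1:ℝ)/(l:ℝ)^2 := by
        rw [Finset.mul_sum]; exact Finset.sum_congr rfl (fun l _ => by rw [div_pow]; ring)
      rw [heq]
      nlinarith [aux_sum_sq (n-1), sq_nonneg t]
    rw [Finset.sum_sub_distrib, ← hHf] at h1
    linarith
  · rw [hlog, hHf]
    refine Finset.sum_le_sum (fun l hl => ?_)
    have hl1 : 1 ≤ l := (Finset.mem_Icc.mp hl).1
    have hlp : (0:ℝ) < l := by exact_mod_cast hl1
    exact aux_log_le (by positivity)

lemma Sf_bounds (n : ℕ) {t : ℝ} (ht : 0 ≤ t) :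
    0 ≤ Sf n t ∧ Sf n t ≤ Hf n ∧ Hf n - Sf n t ≤ 2*t := by
  have hk : ∀ k ∈ Finset.Icc 1 (n-1), (0:ℝ) < k := by
    intro k hk
    have : 1 ≤ k := (Finset.mem_Icc.mp hk).1
    exact_mod_cast this
  refine ⟨Finset.sum_nonneg (fun k hkk => ?_), Finset.sum_le_sum (fun k hkk => ?_), ?_⟩
  · have := hk k hkk; positivity
  · have hkp := hk k hkk
    apply div_le_div_of_nonneg_left one_pos.le hkp
    linarith
  · rw [Hf, Sf, ← Finset.sum_sub_distrib]
    have hterm : ∀ k ∈ Finset.Icc 1 (n-1),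
        1/(k:ℝ) - 1/((k:ℝ)+t) ≤ t * (1/(k:ℝ)^2) := by
      intro k hkk
      have hkp := hk k hkk
      have h1 : 1/(k:ℝ) - 1/((k:ℝ)+t) = t/((k:ℝ)*((k:ℝ)+t)) := by
        field_simp
        ring
      rw [h1]
      rw [mul_one_div]
      apply div_le_div_of_nonneg_left ht (by positivity)
      nlinarith
    calc ∑ k ∈ Finset.Icc 1 (n-1), (1/(k:ℝ) - 1/((k:ℝ)+t))
        ≤ ∑ k ∈ Finset.Icc 1 (n-1), t * (1/(k:ℝ)^2) := Finset.sum_le_sum hterm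
      _ = t * ∑ k ∈ Finset.Icc 1 (n-1), (1:ℝ)/(k:ℝ)^2 := by rw [Finset.mul_sum]
      _ ≤ 2*t := by nlinarith [aux_sum_sq (n-1)]

lemma Hf_nonneg (n : ℕ) : 0 ≤ Hf n := by
  refine Finset.sum_nonneg (fun k hkk => ?_)
  positivity

lemma Hf_bounds (n : ℕ) (hn : 1 ≤ n) : Real.log n ≤ Hf n ∧ Hf n ≤ 1 + Real.log n := by
  obtain ⟨m, rfl⟩ : ∃ m, n = m + 1 := ⟨n - 1, by omega⟩
  have hH : Hf (m+1) = (harmonic m : ℝ) := by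
    rw [Hf, harmonic_eq_sum_Icc]
    simp [one_div]
  constructor
  · have := log_add_one_le_harmonic m
    rw [hH]
    exact_mod_cast this
  · have h1 := harmonic_le_one_add_log m
    have h2 : Real.log m ≤ Real.log (m+1) := by
      rcases Nat.eq_zero_or_pos m with h0 | hm1
      · subst h0; simp
      · apply Real.log_le_log (by exact_mod_cast hm1)
        norm_cast; omega
    rw [hH]
    push_cast at h1 h2 ⊢
    linarith

/-- Suppose `n → ∞` and `θ → 0` (with `θ > 0`). If `θ log n → α ≥ 0` then
`Q_1(n,θ) → 1 - e^{-α}(1 + α)`; in particular if `θ log n → 0` then `Q_1 → 0`. Moreover if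
`θ log n → ∞` then `Q_1 → 1`. -/
theorem Q1_limit (n : ℕ → ℕ) (θ : ℕ → ℝ) (hθpos : ∀ j, 0 < θ j)
    (hn : Tendsto n atTop atTop) (hθ : Tendsto θ atTop (nhds 0)) :
    (∀ α : ℝ, 0 ≤ α →
        Tendsto (fun j => θ j * Real.log (n j)) atTop (nhds α) →
        Tendsto (fun j => Q1 (n j) (θ j)) atTop
          (nhds (1 - Real.exp (-α) * (1 + α)))) ∧
      (Tendsto (fun j => θ j * Real.log (n j)) atTop atTop →
        Tendsto (fun j => Q1 (n j) (θ j)) atTop (nhds 1)) := by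
  have hθ0 : ∀ j, (0:ℝ) ≤ θ j := fun j => (hθpos j).le
  have hene : ∀ᶠ j in atTop, 1 ≤ n j := hn.eventually_ge_atTop 1
  have hdiffb : ∀ᶠ j in atTop,
      0 ≤ θ j * Hf (n j) - θ j * Real.log (n j) ∧
      θ j * Hf (n j) - θ j * Real.log (n j) ≤ θ j := by
    filter_upwards [hene] with j hj
    obtain ⟨h1, h2⟩ := Hf_bounds (n j) hj
    constructor
    · nlinarith [hθ0 j]
    · nlinarith [hθ0 j]
  have hdiff0 : Tendsto (fun j => θ j * Hf (n j) - θ j * Real.log (n j)) atTop (nhds 0) := by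
    apply tendsto_of_tendsto_of_tendsto_of_le_of_le' tendsto_const_nhds hθ
    · filter_upwards [hdiffb] with j h using h.1
    · filter_upwards [hdiffb] with j h using h.2
  have hθsq : Tendsto (fun j => 2 * θ j ^ 2) atTop (nhds 0) := by
    have h := ((hθ.mul hθ).const_mul 2)
    simpa [pow_two] using h
  constructor
  · intro α hα hLα
    have ha : Tendsto (fun j => θ j * Hf (n j)) atTop (nhds α) := by
      have h := hLα.add hdiff0
      simp only [add_zero] at h
      exact h.congr (fun j => by ring)
    have halo : Tendsto (fun j => θ j * Hf (n j) - 2 * θ j ^ 2) atTop (nhds α) := by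
      have h := ha.sub hθsq
      simpa using h
    have hlogP : Tendsto (fun j => Real.log (Pf (n j) (θ j))) atTop (nhds α) := by
      apply tendsto_of_tendsto_of_tendsto_of_le_of_le' halo ha
      · exact Eventually.of_forall (fun j => (log_Pf_bounds (n j) (hθ0 j)).1)
      · exact Eventually.of_forall (fun j => (log_Pf_bounds (n j) (hθ0 j)).2)
    have hP : Tendsto (fun j => Pf (n j) (θ j)) atTop (nhds (Real.exp α)) :=
      ((Real.continuous_exp.tendsto α).comp hlogP).congr (fun j => Real.exp_log (Pf_pos (n j) (hθ0 j)))
    have hPinv : Tendsto (fun j => (Pf (n j) (θ j))⁻¹) atTop (nhds (Real.exp α)⁻¹) :=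
      hP.inv₀ (Real.exp_ne_zero α)
    have hS : Tendsto (fun j => θ j * Sf (n j) (θ j)) atTop (nhds α) := by
      apply tendsto_of_tendsto_of_tendsto_of_le_of_le' halo ha
      · refine Eventually.of_forall (fun j => ?_)
        obtain ⟨_, _, h3⟩ := Sf_bounds (n j) (hθ0 j)
        nlinarith [hθ0 j]
      · refine Eventually.of_forall (fun j => ?_)
        obtain ⟨_, h2, _⟩ := Sf_bounds (n j) (hθ0 j)
        nlinarith [hθ0 j]
    have hfin : Tendsto (fun j => 1 - (Pf (n j) (θ j))⁻¹ * (1 + θ j * Sf (n j) (θ j))) atTop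
        (nhds (1 - (Real.exp α)⁻¹ * (1 + α))) :=
      tendsto_const_nhds.sub (hPinv.mul (tendsto_const_nhds.add hS))
    rw [← Real.exp_neg] at hfin
    exact hfin.congr (fun j => (Q1_eq (n j) (θ j)).symm)
  · intro hLtop
    have ha : Tendsto (fun j => θ j * Hf (n j)) atTop atTop := by
      have h := hLtop.atTop_add hdiff0
      exact h.congr (fun j => by ring)
    have hg1 : Tendsto (fun x : ℝ => (1 + x) * Real.exp (-x)) atTop (nhds 0) := by
      have h0 := Real.tendsto_pow_mul_exp_neg_atTop_nhds_zero 0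
      have h1 := Real.tendsto_pow_mul_exp_neg_atTop_nhds_zero 1
      have h := h0.add h1
      simp only [add_zero] at h
      exact h.congr (fun x => by ring)
    have hE0 : Tendsto (fun j => (Pf (n j) (θ j))⁻¹ * (1 + θ j * Sf (n j) (θ j))) atTop
        (nhds 0) := by
      apply squeeze_zero' (g := fun j =>
        Real.exp (2 * θ j ^ 2) * ((1 + θ j * Hf (n j)) * Real.exp (-(θ j * Hf (n j)))))
      · refine Eventually.of_forall (fun j => ?_)
        obtain ⟨h1, _, _⟩ := Sf_bounds (n j) (hθ0 j)
        have := Pf_pos (n j) (hθ0 j)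
        have hθj := hθ0 j
        positivity
      · refine Eventually.of_forall (fun j => ?_)
        have hPp := Pf_pos (n j) (hθ0 j)
        obtain ⟨hs0, hs1, _⟩ := Sf_bounds (n j) (hθ0 j)
        have hlb := (log_Pf_bounds (n j) (hθ0 j)).1
        have hinv : (Pf (n j) (θ j))⁻¹ ≤ Real.exp (2 * θ j ^ 2 - θ j * Hf (n j)) := by
          have h1 : Real.exp (θ j * Hf (n j) - 2 * θ j ^ 2) ≤ Pf (n j) (θ j) := by
            calc Real.exp (θ j * Hf (n j) - 2 * θ j ^ 2)
                ≤ Real.exp (Real.log (Pf (n j) (θ j))) := Real.exp_le_exp.mpr hlb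
              _ = Pf (n j) (θ j) := Real.exp_log hPp
          calc (Pf (n j) (θ j))⁻¹ ≤ (Real.exp (θ j * Hf (n j) - 2 * θ j ^ 2))⁻¹ := by
                exact inv_anti₀ (Real.exp_pos _) h1
            _ = Real.exp (2 * θ j ^ 2 - θ j * Hf (n j)) := by
                rw [← Real.exp_neg]; ring_nf
        have hnum : 1 + θ j * Sf (n j) (θ j) ≤ 1 + θ j * Hf (n j) := by
          have := mul_le_mul_of_nonneg_left hs1 (hθ0 j)
          linarith
        have hnn : (0:ℝ) ≤ 1 + θ j * Sf (n j) (θ j) := by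
          have := mul_nonneg (hθ0 j) hs0; linarith
        calc (Pf (n j) (θ j))⁻¹ * (1 + θ j * Sf (n j) (θ j))
            ≤ Real.exp (2 * θ j ^ 2 - θ j * Hf (n j)) * (1 + θ j * Hf (n j)) := by
              apply mul_le_mul hinv hnum hnn (Real.exp_pos _).le
          _ = Real.exp (2 * θ j ^ 2) * ((1 + θ j * Hf (n j)) * Real.exp (-(θ j * Hf (n j)))) := by
              rw [show 2 * θ j ^ 2 - θ j * Hf (n j) = 2 * θ j ^ 2 + -(θ j * Hf (n j)) by ring,
                Real.exp_add]
              ring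
      · have hexp1 : Tendsto (fun j => Real.exp (2 * θ j ^ 2)) atTop (nhds 1) := by
          have h := (Real.continuous_exp.tendsto 0).comp hθsq
          simpa [Function.comp_def] using h
        have hcomp : Tendsto (fun j => (1 + θ j * Hf (n j)) * Real.exp (-(θ j * Hf (n j))))
            atTop (nhds 0) := hg1.comp ha
        have h := hexp1.mul hcomp
        simpa using h
    have hfin := tendsto_const_nhds (f := atTop) (x := (1:ℝ)) |>.sub hE0
    simp only [sub_zero] at hfin
    exact hfin.congr (fun j => (Q1_eq (n j) (θ j)).symm)
end
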